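/- arXiv:2010.07684 — 3 statements merged into one kernel-verified Lean document; each statement's English description precedes it below -/
import Mathlib

section
/- Let (X,Y,Z) be random variables taking values in 𝒳×ℝ×𝒵 with 𝒵 ⊆ ℝ^{d'}, and suppose the law of Z has a density p with respect to Lebesgue measure on ℝ^{d'}. Let k : 𝒵×𝒵 → ℝ be continuous, bounded, and integrally strictly positive definite. Let f : 𝒳 → ℝ be measurable with E[(Y−f(X))² k(Z,Z)] < ∞ and E[|Y−f(X)|] < ∞, and assume the function g(z) := E[Y−f(X) | Z=z]·p(z) satisfies ∫ g(z)² dz < ∞. Then R_k(f) = 0 if and only if E[Y−f(X) | Z] = 0 almost surely (i.e., for P_Z-almost all z). -/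
/-! Write `e = Y - f(X)` and `h = p · E[e | Z = ·]`, which agrees with `g` where `p ≠ 0` and so
is square integrable. Pulling a bounded function `ψ(Z)` out of
the conditional expectation and changing variables to Lebesgue measure gives
`E[ψ(Z) e] = ∫ ψ h` for every bounded measurable `ψ`. Applied twice, inside Fubini, this turns
the risk into the quadratic form `∬ h(z) k(z,z') h(z') dz dz'`, which by strict positive
definiteness vanishes iff `h = 0` a.e., i.e. iff `E[e | Z] = 0` a.s. -/

open MeasureTheory

/-- A kernel `k` on `ℝ^{d'}` is *integrally strictly positive definite* (ISPD) if
`∬ g(z) k(z,z') g(z') dz dz' > 0` for every measurable `g` with `0 < ∫ g² < ∞`. -/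
def IsISPDKernel {d' : ℕ} (k : (Fin d' → ℝ) → (Fin d' → ℝ) → ℝ) : Prop :=
  ∀ g : (Fin d' → ℝ) → ℝ, Measurable g →
    0 < ∫ z, (g z) ^ 2 →
    Integrable (fun z => (g z) ^ 2) →
    0 < ∫ q : (Fin d' → ℝ) × (Fin d' → ℝ),
        g q.1 * k q.1 q.2 * g q.2 ∂(volume.prod volume)

open Function

theorem integral_mul_condExp_of_bound {Ω : Type*} {m mΩ : MeasurableSpace Ω} {μ : Measure[mΩ] Ω}
    [IsFiniteMeasure μ] (hm : m ≤ mΩ) {f g : Ω → ℝ} (hf : StronglyMeasurable[m] f) {c : ℝ}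
    (hf_bound : ∀ ω, |f ω| ≤ c) (hg : Integrable g μ) :
    ∫ ω, f ω * g ω ∂μ = ∫ ω, f ω * μ[g | m] ω ∂μ :=
  calc ∫ ω, f ω * g ω ∂μ = ∫ ω, μ[f * g | m] ω ∂μ := (integral_condExp hm).symm
    _ = ∫ ω, f ω * μ[g | m] ω ∂μ :=
      integral_congr_ae (condExp_stronglyMeasurable_mul_of_bound hm hf hg c (ae_of_all _ hf_bound))

theorem MeasureTheory.Integrable.mul_bounded_mul_prod {α β : Type*} [MeasurableSpace α]
    [MeasurableSpace β] {μ : Measure α} {ν : Measure β} [SFinite ν] {u : α → ℝ} {v : β → ℝ}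
    {K : α × β → ℝ} {C : ℝ}
    (hu : Integrable u μ) (hv : Integrable v ν) (hK : AEStronglyMeasurable K (μ.prod ν))
    (hKC : ∀ q, |K q| ≤ C) : Integrable (fun q => u q.1 * K q * v q.2) (μ.prod ν) :=
  ((hu.mul_prod hv).bdd_mul hK (ae_of_all _ hKC)).congr (ae_of_all _ fun q => by ring)

section Density

variable {Ω E : Type*} [MeasurableSpace Ω] [MeasurableSpace E] {P : Measure Ω} {ν : Measure E}
  {Z : Ω → E} {p : E → ℝ}

theorem integral_comp_eq_integral_density_mul (hZ : Measurable Z) (hp_meas : Measurable p)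
    (hp_nonneg : ∀ z, 0 ≤ p z) (hp : P.map Z = ν.withDensity (fun z => ENNReal.ofReal (p z)))
    {F : E → ℝ} (hF : Measurable F) : ∫ ω, F (Z ω) ∂P = ∫ z, p z * F z ∂ν := by
  rw [← integral_map hZ.aemeasurable hF.aestronglyMeasurable, hp,
    integral_withDensity_eq_integral_toReal_smul hp_meas.ennreal_ofReal
      (ae_of_all _ fun _ => ENNReal.ofReal_lt_top)]
  simp only [ENNReal.toReal_ofReal (hp_nonneg _), smul_eq_mul]

theorem MeasureTheory.Integrable.density_mul_of_comp (hZ : Measurable Z) (hp_meas : Measurable p)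
    (hp_nonneg : ∀ z, 0 ≤ p z) (hp : P.map Z = ν.withDensity (fun z => ENNReal.ofReal (p z)))
    {F : E → ℝ} (hF : Measurable F) (hFZ : Integrable (fun ω => F (Z ω)) P) :
    Integrable (fun z => p z * F z) ν := by
  have hF_map : Integrable F (P.map Z) :=
    (integrable_map_measure hF.aestronglyMeasurable hZ.aemeasurable).mpr hFZ
  rw [hp, integrable_withDensity_iff_integrable_smul' hp_meas.ennreal_ofReal
    (ae_of_all _ fun _ => ENNReal.ofReal_lt_top)] at hF_map
  simpa only [ENNReal.toReal_ofReal (hp_nonneg _), smul_eq_mul] using hF_map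

theorem comp_ae_eq_zero_iff_density_mul (hZ : Measurable Z) (hp_meas : Measurable p)
    (hp_nonneg : ∀ z, 0 ≤ p z) (hp : P.map Z = ν.withDensity (fun z => ENNReal.ofReal (p z)))
    {F : E → ℝ} (hF : Measurable F) :
    (fun ω => F (Z ω)) =ᵐ[P] 0 ↔ (fun z => p z * F z) =ᵐ[ν] 0 := by
  change (∀ᵐ ω ∂P, F (Z ω) = 0) ↔ ∀ᵐ z ∂ν, p z * F z = 0
  rw [← ae_map_iff hZ.aemeasurable (measurableSet_eq_fun hF measurable_const), hp,
    ae_withDensity_iff hp_meas.ennreal_ofReal]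
  refine Filter.eventually_congr (ae_of_all _ fun z => ?_)
  rw [ne_eq, ENNReal.ofReal_eq_zero, not_le, mul_eq_zero]
  rcases (hp_nonneg z).lt_or_eq with hpz | hpz
  · simp [hpz, hpz.ne']
  · simp [← hpz]

theorem ae_density_comp_ne_zero (hZ : Measurable Z) (hp_meas : Measurable p)
    (hp : P.map Z = ν.withDensity (fun z => ENNReal.ofReal (p z))) :
    ∀ᵐ ω ∂P, p (Z ω) ≠ 0 := by
  rw [← ae_map_iff (p := fun z => p z ≠ 0) hZ.aemeasurable
    (measurableSet_eq_fun hp_meas measurable_const).compl, hp,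
    ae_withDensity_iff hp_meas.ennreal_ofReal]
  exact ae_of_all _ fun z hz hpz => hz (by simp [hpz])

theorem ae_eq_div_density_comp (hZ : Measurable Z) (hp_meas : Measurable p)
    (hp : P.map Z = ν.withDensity (fun z => ENNReal.ofReal (p z))) {m : Ω → ℝ} {g : E → ℝ}
    (hg : ∀ᵐ ω ∂P, g (Z ω) = m ω * p (Z ω)) : m =ᵐ[P] fun ω => g (Z ω) / p (Z ω) := by
  filter_upwards [hg, ae_density_comp_ne_zero hZ hp_meas hp] with ω hω hpω
  rw [hω, mul_div_cancel_right₀ _ hpω]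

theorem integral_comp_mul_eq_of_condExp_ae_eq_comp [IsFiniteMeasure P] (hZ : Measurable Z)
    (hp_meas : Measurable p) (hp_nonneg : ∀ z, 0 ≤ p z)
    (hp : P.map Z = ν.withDensity (fun z => ENNReal.ofReal (p z)))
    {e : Ω → ℝ} (he : Integrable e P) {φ : E → ℝ} (hφ : Measurable φ)
    (hm : P[e | MeasurableSpace.comap Z inferInstance] =ᵐ[P] fun ω => φ (Z ω))
    {ψ : E → ℝ} {D : ℝ} (hψ : Measurable ψ) (hψD : ∀ z, |ψ z| ≤ D) :
    ∫ ω, ψ (Z ω) * e ω ∂P = ∫ z, ψ z * (p z * φ z) ∂ν :=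
  calc ∫ ω, ψ (Z ω) * e ω ∂P
      = ∫ ω, ψ (Z ω) * P[e | MeasurableSpace.comap Z inferInstance] ω ∂P :=
        integral_mul_condExp_of_bound hZ.comap_le
          (hψ.comp (comap_measurable Z)).stronglyMeasurable (fun ω => hψD (Z ω)) he
    _ = ∫ ω, ψ (Z ω) * φ (Z ω) ∂P :=
        integral_congr_ae (hm.mono fun ω hω => congrArg (ψ (Z ω) * ·) hω)
    _ = ∫ z, p z * (ψ z * φ z) ∂ν :=
        integral_comp_eq_integral_density_mul hZ hp_meas hp_nonneg hp (hψ.mul hφ)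
    _ = ∫ z, ψ z * (p z * φ z) ∂ν := by simp only [mul_left_comm]

end Density

theorem integral_prod_kernel_eq_of_integral_comp_mul_eq {Ω E : Type*} [MeasurableSpace Ω]
    [MeasurableSpace E] {P : Measure Ω} {ν : Measure E} [SFinite P] [SFinite ν] {Z : Ω → E}
    (hZ : Measurable Z) {e : Ω → ℝ} (he : Integrable e P) {h : E → ℝ} (hh_meas : Measurable h)
    (hh : Integrable h ν)
    (hrep : ∀ (ψ : E → ℝ) (D : ℝ), Measurable ψ → (∀ z, |ψ z| ≤ D) →
      ∫ ω, ψ (Z ω) * e ω ∂P = ∫ z, ψ z * h z ∂ν)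
    {k : E → E → ℝ} (hk : Measurable (uncurry k)) {C : ℝ} (hC : ∀ z z', |k z z'| ≤ C) :
    ∫ q, e q.1 * k (Z q.1) (Z q.2) * e q.2 ∂(P.prod P)
      = ∫ q, h q.1 * k q.1 q.2 * h q.2 ∂(ν.prod ν) := by
  set B : E → ℝ := fun z => ∫ z', k z z' * h z' ∂ν
  have hB_meas : Measurable B :=
    (hk.mul (hh_meas.comp measurable_snd)).stronglyMeasurable.integral_prod_right'.measurable
  have hB_bdd : ∀ z, |B z| ≤ C * ∫ z', |h z'| ∂ν := fun z => by
    rw [← integral_const_mul, ← Real.norm_eq_abs]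
    refine norm_integral_le_of_norm_le (hh.abs.const_mul C) (ae_of_all _ fun z' => ?_)
    rw [Real.norm_eq_abs, abs_mul]
    exact mul_le_mul_of_nonneg_right (hC z z') (abs_nonneg _)
  have hinner : ∀ ω, ∫ ω', e ω * k (Z ω) (Z ω') * e ω' ∂P = B (Z ω) * e ω := fun ω => by
    simp only [mul_assoc, integral_const_mul]
    rw [hrep (k (Z ω)) C (hk.comp (measurable_const.prodMk measurable_id)) (hC (Z ω)), mul_comm]
  have hPP : Integrable (fun q => e q.1 * k (Z q.1) (Z q.2) * e q.2) (P.prod P) :=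
    he.mul_bounded_mul_prod (K := fun q => k (Z q.1) (Z q.2)) he
      (hk.comp ((hZ.comp measurable_fst).prodMk (hZ.comp measurable_snd))).aestronglyMeasurable
      (fun q => hC _ _)
  have hνν : Integrable (fun q => h q.1 * k q.1 q.2 * h q.2) (ν.prod ν) :=
    hh.mul_bounded_mul_prod (K := uncurry k) hh hk.aestronglyMeasurable (fun q => hC _ _)
  calc ∫ q, e q.1 * k (Z q.1) (Z q.2) * e q.2 ∂(P.prod P)
      = ∫ ω, B (Z ω) * e ω ∂P := by rw [integral_prod _ hPP]; simp only [hinner]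
    _ = ∫ z, B z * h z ∂ν := hrep B _ hB_meas hB_bdd
    _ = ∫ q, h q.1 * k q.1 q.2 * h q.2 ∂(ν.prod ν) := by
        rw [integral_prod _ hνν]
        refine integral_congr_ae (ae_of_all _ fun z => ?_)
        simp only [B, mul_comm _ (h z), ← integral_const_mul, mul_assoc]

theorem IsISPDKernel.integral_eq_zero_iff {d' : ℕ} {k : (Fin d' → ℝ) → (Fin d' → ℝ) → ℝ}
    (hk : IsISPDKernel k) {h : (Fin d' → ℝ) → ℝ} (hh : Measurable h)
    (hh_sq : Integrable (fun z => h z ^ 2)) :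
    ∫ q, h q.1 * k q.1 q.2 * h q.2 ∂(volume.prod volume) = 0 ↔ h =ᵐ[volume] 0 := by
  refine ⟨fun hJ => ?_, fun h0 => ?_⟩
  · by_contra hne
    have hsq_pos : 0 < ∫ z, h z ^ 2 := by
      refine (integral_nonneg fun z => sq_nonneg (h z)).lt_of_ne fun hsq => hne ?_
      filter_upwards [(integral_eq_zero_iff_of_nonneg (fun z => sq_nonneg (h z)) hh_sq).mp
        hsq.symm] with z hz
      exact pow_eq_zero_iff two_ne_zero |>.mp hz
    exact (hk h hh hsq_pos hh_sq).ne' hJ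
  · refine integral_eq_zero_of_ae ?_
    filter_upwards [Measure.quasiMeasurePreserving_fst.ae_eq h0] with q hq
    simp [show h q.1 = 0 from hq]

theorem mmr_risk_zero_iff_cmr_general
    {Ω 𝒳 : Type*} [MeasurableSpace Ω] [MeasurableSpace 𝒳] {d' : ℕ}
    (P : Measure Ω) [IsProbabilityMeasure P]
    (X : Ω → 𝒳) (Y : Ω → ℝ) (Z : Ω → (Fin d' → ℝ))
    (hX : Measurable X) (hY : Measurable Y) (hZ : Measurable Z)
    -- the law of Z has density p with respect to Lebesgue measure
    (p : (Fin d' → ℝ) → ℝ) (hp_meas : Measurable p) (hp_nonneg : ∀ z, 0 ≤ p z)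
    (hp : Measure.map Z P = volume.withDensity (fun z => ENNReal.ofReal (p z)))
    (k : (Fin d' → ℝ) → (Fin d' → ℝ) → ℝ)
    (hk_cont : Continuous (Function.uncurry k))
    (hk_bdd : ∃ C, ∀ z z', |k z z'| ≤ C)
    (hk_ispd : IsISPDKernel k)
    (f : 𝒳 → ℝ) (hf : Measurable f)
    (hL1 : Integrable (fun ω => |Y ω - f (X ω)|) P)
    -- g(z) := E[Y − f(X) | Z = z] · p(z) is square integrable
    (g : (Fin d' → ℝ) → ℝ) (hg_meas : Measurable g)
    (hg_rep : ∀ᵐ ω ∂P,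
      g (Z ω)
        = (P[fun ω' => Y ω' - f (X ω') | MeasurableSpace.comap Z inferInstance]) ω
            * p (Z ω))
    (hg_sq : Integrable (fun z => (g z) ^ 2))
    (μ : Measure (𝒳 × ℝ × (Fin d' → ℝ)))
    (hμ : μ = Measure.map (fun ω => (X ω, Y ω, Z ω)) P) :
    (∫ q, (q.1.2.1 - f q.1.1) * (q.2.2.1 - f q.2.1) * k q.1.2.2 q.2.2.2
        ∂(μ.prod μ)) = 0
      ↔ (P[fun ω' => Y ω' - f (X ω') | MeasurableSpace.comap Z inferInstance])
          =ᵐ[P] 0 := by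
  obtain ⟨C, hC⟩ := hk_bdd
  set e : Ω → ℝ := fun ω => Y ω - f (X ω)
  have he : Integrable e P :=
    (integrable_norm_iff (hY.sub (hf.comp hX)).aestronglyMeasurable).mp hL1
  -- `g z / 0 = 0`, so `h` below is `g` on `{p ≠ 0}` and `0` elsewhere
  set φ : (Fin d' → ℝ) → ℝ := fun z => g z / p z
  have hφ : Measurable φ := hg_meas.div hp_meas
  have hmφ : P[e | MeasurableSpace.comap Z inferInstance] =ᵐ[P] fun ω => φ (Z ω) :=
    ae_eq_div_density_comp hZ hp_meas hp hg_rep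
  set h : (Fin d' → ℝ) → ℝ := fun z => p z * φ z
  have hh_meas : Measurable h := hp_meas.mul hφ
  have hh_int : Integrable h :=
    integrable_condExp.congr hmφ |>.density_mul_of_comp hZ hp_meas hp_nonneg hp hφ
  have hh_sq : Integrable (fun z => h z ^ 2) := by
    refine hg_sq.mono' (hh_meas.pow_const 2).aestronglyMeasurable (ae_of_all _ fun z => ?_)
    rcases eq_or_ne (p z) 0 with hpz | hpz
    · simp [h, hpz, sq_nonneg]
    · simp [h, φ, mul_div_cancel₀ _ hpz]
  have hT : Measurable fun ω => (X ω, Y ω, Z ω) := hX.prodMk (hY.prodMk hZ)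
  have hrisk : ∫ q, (q.1.2.1 - f q.1.1) * (q.2.2.1 - f q.2.1) * k q.1.2.2 q.2.2.2 ∂(μ.prod μ)
      = ∫ q, e q.1 * k (Z q.1) (Z q.2) * e q.2 ∂(P.prod P) := by
    rw [hμ, Measure.map_prod_map _ _ hT hT, integral_map (hT.prodMap hT).aemeasurable
      (by fun_prop)]
    exact integral_congr_ae (ae_of_all _ fun q => by simp only [Prod.map, e]; ring)
  rw [hrisk, integral_prod_kernel_eq_of_integral_comp_mul_eq hZ he hh_meas hh_int
      (fun ψ D hψ hψD => integral_comp_mul_eq_of_condExp_ae_eq_comp hZ hp_meas hp_nonneg hp he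
        hφ hmφ hψ hψD) hk_cont.measurable hC,
    hk_ispd.integral_eq_zero_iff hh_meas hh_sq,
    ← comp_ae_eq_zero_iff_density_mul hZ hp_meas hp_nonneg hp hφ]
  exact ⟨hmφ.trans, hmφ.symm.trans⟩

/-- Paper's Theorem 3.1: for a continuous, bounded, integrally
strictly positive definite kernel `k`, the MMR risk
`R_k(f) = ∫ (y−f(x))(y'−f(x'))k(z,z') d(μ⊗μ)` vanishes if and only if
`E[Y − f(X) | Z] = 0` almost surely. -/
theorem mmr_risk_zero_iff_cmr
    {Ω 𝒳 : Type*} [MeasurableSpace Ω] [MeasurableSpace 𝒳] {d' : ℕ}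
    (P : Measure Ω) [IsProbabilityMeasure P]
    (X : Ω → 𝒳) (Y : Ω → ℝ) (Z : Ω → (Fin d' → ℝ))
    (hX : Measurable X) (hY : Measurable Y) (hZ : Measurable Z)
    -- the law of Z has density p with respect to Lebesgue measure
    (p : (Fin d' → ℝ) → ℝ) (hp_meas : Measurable p) (hp_nonneg : ∀ z, 0 ≤ p z)
    (hp : Measure.map Z P = volume.withDensity (fun z => ENNReal.ofReal (p z)))
    (k : (Fin d' → ℝ) → (Fin d' → ℝ) → ℝ)
    (hk_cont : Continuous (Function.uncurry k))
    (hk_bdd : ∃ C, ∀ z z', |k z z'| ≤ C)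
    (hk_ispd : IsISPDKernel k)
    (f : 𝒳 → ℝ) (hf : Measurable f)
    (hmom : Integrable (fun ω => (Y ω - f (X ω)) ^ 2 * k (Z ω) (Z ω)) P)
    (hL1 : Integrable (fun ω => |Y ω - f (X ω)|) P)
    -- g(z) := E[Y − f(X) | Z = z] · p(z) is square integrable
    (g : (Fin d' → ℝ) → ℝ) (hg_meas : Measurable g)
    (hg_rep : ∀ᵐ ω ∂P,
      g (Z ω)
        = (P[fun ω' => Y ω' - f (X ω') | MeasurableSpace.comap Z inferInstance]) ω
            * p (Z ω))
    (hg_sq : Integrable (fun z => (g z) ^ 2))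
    (μ : Measure (𝒳 × ℝ × (Fin d' → ℝ)))
    (hμ : μ = Measure.map (fun ω => (X ω, Y ω, Z ω)) P) :
    (∫ q, (q.1.2.1 - f q.1.1) * (q.2.2.1 - f q.2.1) * k q.1.2.2 q.2.2.2
        ∂(μ.prod μ)) = 0
      ↔ (P[fun ω' => Y ω' - f (X ω') | MeasurableSpace.comap Z inferInstance])
          =ᵐ[P] 0 :=
  mmr_risk_zero_iff_cmr_general P X Y Z hX hY hZ p hp_meas hp_nonneg hp k hk_cont hk_bdd hk_ispd f
    hf hL1 g hg_meas hg_rep hg_sq μ hμ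
end

section
/- Let k : 𝒵×𝒵 → ℝ and B > 0. For all functions f, f' : 𝒳 → ℝ with sup_x |f(x)| ≤ B and sup_x |f'(x)| ≤ B, all y, y' ∈ [−B, B], and all u = (x,y,z), u' = (x',y',z'): |h_f(u,u') − h_{f'}(u,u')| ≤ 4B·|k(z,z')|·sup_x |f(x) − f'(x)|, where h_f(u,u') := (y − f(x))(y' − f(x')) k(z,z'). -/
/-- Paper's Lemma D.2: Lipschitz bound of
`h_f(u,u') = (y − f(x))(y' − f(x'))k(z,z')` in `f` with respect to the sup norm:
if `‖f‖_∞, ‖f'‖_∞ ≤ B` and `|y|, |y'| ≤ B`, then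
`|h_f(u,u') − h_{f'}(u,u')| ≤ 4B |k(z,z')| ‖f − f'‖_∞`. -/
theorem hf_lipschitz_in_f
    {𝒳 𝒵 : Type*} (k : 𝒵 → 𝒵 → ℝ) (B : ℝ) (hB : 0 < B) :
    ∀ f f' : 𝒳 → ℝ, (∀ x, |f x| ≤ B) → (∀ x, |f' x| ≤ B) →
      ∀ (y y' : ℝ), |y| ≤ B → |y'| ≤ B →
        ∀ (x x' : 𝒳) (z z' : 𝒵),
          |(y - f x) * (y' - f x') * k z z'
              - (y - f' x) * (y' - f' x') * k z z'|
            ≤ 4 * B * |k z z'| * ⨆ t : 𝒳, |f t - f' t| := by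
  intro f f' hf hf' y y' hy hy' x x' z z'
  have : Nonempty 𝒳 := ⟨x⟩
  set S := ⨆ t : 𝒳, |f t - f' t| with hS
  have hbdd : BddAbove (Set.range fun t : 𝒳 => |f t - f' t|) := by
    refine ⟨2 * B, ?_⟩
    rintro _ ⟨t, rfl⟩
    calc |f t - f' t| ≤ |f t| + |f' t| := abs_sub _ _
    _ ≤ B + B := add_le_add (hf t) (hf' t)
    _ = 2 * B := by ring
  have hle : ∀ t, |f t - f' t| ≤ S := fun t => le_ciSup hbdd t
  have hSnn : 0 ≤ S := le_trans (abs_nonneg _) (hle x)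
  have key : |(y - f x) * (y' - f x') - (y - f' x) * (y' - f' x')| ≤ 4 * B * S := by
    have h1 : (y - f x) * (y' - f x') - (y - f' x) * (y' - f' x')
        = (y - f x) * (f' x' - f x') + (f' x - f x) * (y' - f' x') := by ring
    rw [h1]
    calc |(y - f x) * (f' x' - f x') + (f' x - f x) * (y' - f' x')|
        ≤ |(y - f x) * (f' x' - f x')| + |(f' x - f x) * (y' - f' x')| := abs_add_le _ _
      _ = |y - f x| * |f' x' - f x'| + |f' x - f x| * |y' - f' x'| := by
          rw [abs_mul, abs_mul]
      _ ≤ (2 * B) * S + S * (2 * B) := by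
          gcongr
          · calc |y - f x| ≤ |y| + |f x| := abs_sub _ _
              _ ≤ B + B := add_le_add hy (hf x)
              _ = 2 * B := by ring
          · rw [abs_sub_comm]; exact hle x'
          · rw [abs_sub_comm]; exact hle x
          · calc |y' - f' x'| ≤ |y'| + |f' x'| := abs_sub _ _
              _ ≤ B + B := add_le_add hy' (hf' x')
              _ = 2 * B := by ring
      _ = 4 * B * S := by ring
  calc |(y - f x) * (y' - f x') * k z z' - (y - f' x) * (y' - f' x') * k z z'|
      = |(y - f x) * (y' - f x') - (y - f' x) * (y' - f' x')| * |k z z'| := by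
        rw [← abs_mul]; ring_nf
    _ ≤ (4 * B * S) * |k z z'| := by gcongr
    _ = 4 * B * |k z z'| * S := by ring
end

section
/- Let 𝒳, 𝒵 be metric spaces, W := 𝒳×ℝ×𝒵, μ a finite signed measure on W×W, and k : 𝒵×𝒵 → ℝ bounded measurable; assume ∫ (1+|y|)(1+|y'|)|k(z,z')| d|μ|(u,u') < ∞ where u=(x,y,z), u'=(x',y',z'). For bounded continuous f : 𝒳 → ℝ define R(f) := ∫ (y−f(x))(y'−f(x'))k(z,z') dμ(u,u'). Then R is Fréchet differentiable at every f (with respect to the sup norm on bounded continuous functions), with derivative the bounded linear map h ↦ −∫ k(z,z')[(y'−f(x')) h(x) + (y−f(x)) h(x')] dμ(u,u'); indeed for every bounded continuous h, |R(f+h) − R(f) − DR_f(h)| ≤ (sup_x |h(x)|)² · ∫ |k(z,z')| d|μ|(u,u'). -/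
open MeasureTheory BoundedContinuousFunction Asymptotics

/-- Integral of a real function against a finite signed measure, via its Jordan
decomposition. -/
noncomputable def signedIntegral {α : Type*} [MeasurableSpace α]
    (μ : SignedMeasure α) (f : α → ℝ) : ℝ :=
  (∫ a, f a ∂μ.toJordanDecomposition.posPart)
    - ∫ a, f a ∂μ.toJordanDecomposition.negPart

section Aux

variable {α : Type*} [MeasurableSpace α] {μ : SignedMeasure α}

lemma SIaux.tv_eq (μ : SignedMeasure α) : μ.totalVariation
    = μ.toJordanDecomposition.posPart + μ.toJordanDecomposition.negPart := rfl

lemma SIaux.int_pos {g : α → ℝ} (hg : Integrable g μ.totalVariation) :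
    Integrable g μ.toJordanDecomposition.posPart :=
  (integrable_add_measure.mp (by rwa [SIaux.tv_eq] at hg)).1

lemma SIaux.int_neg {g : α → ℝ} (hg : Integrable g μ.totalVariation) :
    Integrable g μ.toJordanDecomposition.negPart :=
  (integrable_add_measure.mp (by rwa [SIaux.tv_eq] at hg)).2

lemma SIaux.signedIntegral_add {g₁ g₂ : α → ℝ}
    (h₁ : Integrable g₁ μ.totalVariation) (h₂ : Integrable g₂ μ.totalVariation) :
    signedIntegral μ (fun a => g₁ a + g₂ a)
      = signedIntegral μ g₁ + signedIntegral μ g₂ := by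
  unfold signedIntegral
  rw [integral_add (SIaux.int_pos h₁) (SIaux.int_pos h₂),
    integral_add (SIaux.int_neg h₁) (SIaux.int_neg h₂)]
  ring

lemma SIaux.signedIntegral_const_mul (c : ℝ) (g : α → ℝ) :
    signedIntegral μ (fun a => c * g a) = c * signedIntegral μ g := by
  unfold signedIntegral
  rw [integral_const_mul, integral_const_mul]
  ring

lemma SIaux.abs_signedIntegral_le {g : α → ℝ} (hg : Integrable g μ.totalVariation) :
    |signedIntegral μ g| ≤ ∫ a, |g a| ∂μ.totalVariation := by
  have h1 : |∫ a, g a ∂μ.toJordanDecomposition.posPart|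
      ≤ ∫ a, |g a| ∂μ.toJordanDecomposition.posPart := by
    simpa [Real.norm_eq_abs] using
      norm_integral_le_integral_norm (μ := μ.toJordanDecomposition.posPart) g
  have h2 : |∫ a, g a ∂μ.toJordanDecomposition.negPart|
      ≤ ∫ a, |g a| ∂μ.toJordanDecomposition.negPart := by
    simpa [Real.norm_eq_abs] using
      norm_integral_le_integral_norm (μ := μ.toJordanDecomposition.negPart) g
  have h3 : ∫ a, |g a| ∂μ.totalVariation
      = (∫ a, |g a| ∂μ.toJordanDecomposition.posPart)
        + ∫ a, |g a| ∂μ.toJordanDecomposition.negPart := by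
    rw [SIaux.tv_eq, integral_add_measure (SIaux.int_pos hg).abs (SIaux.int_neg hg).abs]
  unfold signedIntegral
  rw [h3]
  calc |(∫ a, g a ∂μ.toJordanDecomposition.posPart)
      - ∫ a, g a ∂μ.toJordanDecomposition.negPart|
      ≤ |∫ a, g a ∂μ.toJordanDecomposition.posPart|
        + |∫ a, g a ∂μ.toJordanDecomposition.negPart| := abs_sub _ _
    _ ≤ _ := add_le_add h1 h2

end Aux

/-- Paper's Lemma D.3: the MMR risk functional
`R(f) = ∫ (y−f(x))(y'−f(x'))k(z,z') dμ(u,u')` associated with a finite signed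
measure `μ` on pairs of data points is Fréchet differentiable at every bounded
continuous `f`, with derivative
`h ↦ −∫ k(z,z')[(y'−f(x'))h(x) + (y−f(x))h(x')] dμ` and an explicit quadratic
remainder bound `|R(f+h) − R(f) − DR_f(h)| ≤ ‖h‖_∞² ∫ |k| d|μ|`. -/
theorem mmr_risk_frechet_differentiable
    {𝒳 𝒵 : Type*} [MetricSpace 𝒳] [MetricSpace 𝒵]
    [MeasurableSpace 𝒳] [BorelSpace 𝒳] [MeasurableSpace 𝒵] [BorelSpace 𝒵]
    (μ : SignedMeasure ((𝒳 × ℝ × 𝒵) × (𝒳 × ℝ × 𝒵)))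
    (k : 𝒵 → 𝒵 → ℝ)
    (hk_meas : Measurable (Function.uncurry k))
    (hk_bdd : ∃ C, ∀ z z', |k z z'| ≤ C)
    (hint : Integrable
      (fun q : (𝒳 × ℝ × 𝒵) × (𝒳 × ℝ × 𝒵) =>
        (1 + |q.1.2.1|) * (1 + |q.2.2.1|) * |k q.1.2.2 q.2.2.2|)
      μ.totalVariation)
    (R : BoundedContinuousFunction 𝒳 ℝ → ℝ)
    (hR : R = fun f => signedIntegral μ
      (fun q => (q.1.2.1 - f q.1.1) * (q.2.2.1 - f q.2.1) * k q.1.2.2 q.2.2.2)) :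
    ∀ f : BoundedContinuousFunction 𝒳 ℝ,
      ∃ D : BoundedContinuousFunction 𝒳 ℝ →L[ℝ] ℝ,
        HasFDerivAt R D f ∧
        (∀ h : BoundedContinuousFunction 𝒳 ℝ,
          D h = -(signedIntegral μ (fun q =>
            k q.1.2.2 q.2.2.2 *
              ((q.2.2.1 - f q.2.1) * h q.1.1 + (q.1.2.1 - f q.1.1) * h q.2.1)))) ∧
        (∀ h : BoundedContinuousFunction 𝒳 ℝ,
          |R (f + h) - R f - D h|
            ≤ ‖h‖ ^ 2 * ∫ q, |k q.1.2.2 q.2.2.2| ∂μ.totalVariation) := by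
  intro f
  set ν := μ.totalVariation with hν
  -- basic measurability
  have mk : Measurable fun q : (𝒳 × ℝ × 𝒵) × (𝒳 × ℝ × 𝒵) => k q.1.2.2 q.2.2.2 :=
    hk_meas.comp (measurable_fst.snd.snd.prodMk measurable_snd.snd.snd)
  have my1 : Measurable fun q : (𝒳 × ℝ × 𝒵) × (𝒳 × ℝ × 𝒵) => q.1.2.1 :=
    measurable_fst.snd.fst
  have my2 : Measurable fun q : (𝒳 × ℝ × 𝒵) × (𝒳 × ℝ × 𝒵) => q.2.2.1 :=
    measurable_snd.snd.fst
  have mg1 : ∀ g : BoundedContinuousFunction 𝒳 ℝ,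
      Measurable fun q : (𝒳 × ℝ × 𝒵) × (𝒳 × ℝ × 𝒵) => g q.1.1 :=
    fun g => g.continuous.measurable.comp measurable_fst.fst
  have mg2 : ∀ g : BoundedContinuousFunction 𝒳 ℝ,
      Measurable fun q : (𝒳 × ℝ × 𝒵) × (𝒳 × ℝ × 𝒵) => g q.2.1 :=
    fun g => g.continuous.measurable.comp measurable_snd.fst
  -- base integrable function
  set base : (𝒳 × ℝ × 𝒵) × (𝒳 × ℝ × 𝒵) → ℝ :=
    fun q => (1 + |q.1.2.1|) * (1 + |q.2.2.1|) * |k q.1.2.2 q.2.2.2| with hbase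
  -- pointwise bound helper
  have hyb : ∀ (g : BoundedContinuousFunction 𝒳 ℝ) (y : ℝ) (x : 𝒳),
      |y - g x| ≤ (1 + ‖g‖) * (1 + |y|) := by
    intro g y x
    have h1 : |g x| ≤ ‖g‖ := by
      simpa [Real.norm_eq_abs] using g.norm_coe_le_norm x
    have h2 : |y - g x| ≤ |y| + |g x| := abs_sub _ _
    have h3 : (0:ℝ) ≤ ‖g‖ := norm_nonneg g
    have h4 : (0:ℝ) ≤ |y| := abs_nonneg y
    nlinarith
  -- integrand families
  set P : BoundedContinuousFunction 𝒳 ℝ → (𝒳 × ℝ × 𝒵) × (𝒳 × ℝ × 𝒵) → ℝ :=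
    fun g q => (q.1.2.1 - g q.1.1) * (q.2.2.1 - g q.2.1) * k q.1.2.2 q.2.2.2 with hP
  set G : BoundedContinuousFunction 𝒳 ℝ → (𝒳 × ℝ × 𝒵) × (𝒳 × ℝ × 𝒵) → ℝ :=
    fun h q => k q.1.2.2 q.2.2.2 *
      ((q.2.2.1 - f q.2.1) * h q.1.1 + (q.1.2.1 - f q.1.1) * h q.2.1) with hG
  set Q : BoundedContinuousFunction 𝒳 ℝ → (𝒳 × ℝ × 𝒵) × (𝒳 × ℝ × 𝒵) → ℝ :=
    fun h q => k q.1.2.2 q.2.2.2 * h q.1.1 * h q.2.1 with hQ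
  -- shared pointwise bound for G
  have hGptwise : ∀ (h : BoundedContinuousFunction 𝒳 ℝ) q,
      |G h q| ≤ 2 * (1 + ‖f‖) * ‖h‖ * base q := by
    intro h q
    have h1' := hyb f q.1.2.1 q.1.1
    have h2' := hyb f q.2.2.1 q.2.1
    have hh1 : |h q.1.1| ≤ ‖h‖ := by
      simpa [Real.norm_eq_abs] using h.norm_coe_le_norm q.1.1
    have hh2 : |h q.2.1| ≤ ‖h‖ := by
      simpa [Real.norm_eq_abs] using h.norm_coe_le_norm q.2.1
    have hk0 := abs_nonneg (k q.1.2.2 q.2.2.2)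
    have hy1 := abs_nonneg q.1.2.1
    have hy2 := abs_nonneg q.2.2.1
    have hfn : (0:ℝ) ≤ ‖f‖ := norm_nonneg f
    have hhn : (0:ℝ) ≤ ‖h‖ := norm_nonneg h
    simp only [G, hbase]
    rw [abs_mul]
    have htri : |(q.2.2.1 - f q.2.1) * h q.1.1 + (q.1.2.1 - f q.1.1) * h q.2.1|
        ≤ |q.2.2.1 - f q.2.1| * |h q.1.1| + |q.1.2.1 - f q.1.1| * |h q.2.1| := by
      calc _ ≤ |(q.2.2.1 - f q.2.1) * h q.1.1| + |(q.1.2.1 - f q.1.1) * h q.2.1| :=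
            abs_add_le _ _
        _ = _ := by rw [abs_mul, abs_mul]
    have key : |q.2.2.1 - f q.2.1| * |h q.1.1| + |q.1.2.1 - f q.1.1| * |h q.2.1|
        ≤ 2 * (1 + ‖f‖) * ‖h‖ * ((1 + |q.1.2.1|) * (1 + |q.2.2.1|)) := by
      have t1 : |q.2.2.1 - f q.2.1| * |h q.1.1| ≤ (1 + ‖f‖) * (1 + |q.2.2.1|) * ‖h‖ :=
        mul_le_mul h2' hh1 (abs_nonneg _) (by positivity)
      have t2 : |q.1.2.1 - f q.1.1| * |h q.2.1| ≤ (1 + ‖f‖) * (1 + |q.1.2.1|) * ‖h‖ :=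
        mul_le_mul h1' hh2 (abs_nonneg _) (by positivity)
      have inner : (1 + |q.2.2.1|) + (1 + |q.1.2.1|)
          ≤ 2 * ((1 + |q.1.2.1|) * (1 + |q.2.2.1|)) := by
        nlinarith [mul_nonneg hy1 hy2]
      have c0 : (0:ℝ) ≤ (1 + ‖f‖) * ‖h‖ := by positivity
      calc |q.2.2.1 - f q.2.1| * |h q.1.1| + |q.1.2.1 - f q.1.1| * |h q.2.1|
          ≤ (1 + ‖f‖) * (1 + |q.2.2.1|) * ‖h‖ + (1 + ‖f‖) * (1 + |q.1.2.1|) * ‖h‖ :=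
            add_le_add t1 t2
        _ = (1 + ‖f‖) * ‖h‖ * ((1 + |q.2.2.1|) + (1 + |q.1.2.1|)) := by ring
        _ ≤ (1 + ‖f‖) * ‖h‖ * (2 * ((1 + |q.1.2.1|) * (1 + |q.2.2.1|))) :=
            mul_le_mul_of_nonneg_left inner c0
        _ = 2 * (1 + ‖f‖) * ‖h‖ * ((1 + |q.1.2.1|) * (1 + |q.2.2.1|)) := by ring
    calc |k q.1.2.2 q.2.2.2| * |(q.2.2.1 - f q.2.1) * h q.1.1 + (q.1.2.1 - f q.1.1) * h q.2.1|
        ≤ |k q.1.2.2 q.2.2.2| * (2 * (1 + ‖f‖) * ‖h‖ * ((1 + |q.1.2.1|) * (1 + |q.2.2.1|))) :=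
          mul_le_mul_of_nonneg_left (htri.trans key) hk0
      _ = 2 * (1 + ‖f‖) * ‖h‖ * ((1 + |q.1.2.1|) * (1 + |q.2.2.1|) * |k q.1.2.2 q.2.2.2|) := by
          ring
  -- integrability of P g
  have hPint : ∀ g : BoundedContinuousFunction 𝒳 ℝ, Integrable (P g) ν := by
    intro g
    have hm : AEStronglyMeasurable (P g) ν :=
      (((my1.sub (mg1 g)).mul (my2.sub (mg2 g))).mul mk).aestronglyMeasurable
    refine (hint.const_mul ((1 + ‖g‖) * (1 + ‖g‖))).mono' hm ?_
    filter_upwards with q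
    have h1 := hyb g q.1.2.1 q.1.1
    have h2 := hyb g q.2.2.1 q.2.1
    have hk0 := abs_nonneg (k q.1.2.2 q.2.2.2)
    have ha := abs_nonneg (q.1.2.1 - g q.1.1)
    have hb := abs_nonneg (q.2.2.1 - g q.2.1)
    have hy1 := abs_nonneg q.1.2.1
    have hy2 := abs_nonneg q.2.2.1
    have hgn : (0:ℝ) ≤ ‖g‖ := norm_nonneg g
    simp only [Real.norm_eq_abs, P, hbase]
    rw [abs_mul, abs_mul]
    calc |q.1.2.1 - g q.1.1| * |q.2.2.1 - g q.2.1| * |k q.1.2.2 q.2.2.2|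
        ≤ ((1 + ‖g‖) * (1 + |q.1.2.1|)) * ((1 + ‖g‖) * (1 + |q.2.2.1|))
            * |k q.1.2.2 q.2.2.2| := by
          refine mul_le_mul_of_nonneg_right ?_ hk0
          exact mul_le_mul h1 h2 hb (by positivity)
      _ = (1 + ‖g‖) * (1 + ‖g‖)
            * ((1 + |q.1.2.1|) * (1 + |q.2.2.1|) * |k q.1.2.2 q.2.2.2|) := by ring
  -- integrability of G h
  have hGint : ∀ h : BoundedContinuousFunction 𝒳 ℝ, Integrable (G h) ν := by
    intro h
    have hm : AEStronglyMeasurable (G h) ν :=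
      (mk.mul (((my2.sub (mg2 f)).mul (mg1 h)).add
        ((my1.sub (mg1 f)).mul (mg2 h)))).aestronglyMeasurable
    refine (hint.const_mul (2 * (1 + ‖f‖) * ‖h‖)).mono' hm ?_
    filter_upwards with q
    simpa [Real.norm_eq_abs] using hGptwise h q
  -- integrability of |k| and of Q h
  have hkint : Integrable (fun q : (𝒳 × ℝ × 𝒵) × (𝒳 × ℝ × 𝒵) =>
      |k q.1.2.2 q.2.2.2|) ν := by
    refine hint.mono' mk.abs.aestronglyMeasurable ?_
    filter_upwards with q
    have hk0 := abs_nonneg (k q.1.2.2 q.2.2.2)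
    have hy1 := abs_nonneg q.1.2.1
    have hy2 := abs_nonneg q.2.2.1
    simp only [Real.norm_eq_abs, abs_abs, hbase]
    nlinarith [mul_nonneg hy1 hk0, mul_nonneg hy2 hk0,
      mul_nonneg (mul_nonneg hy1 hy2) hk0]
  have hQptwise : ∀ (h : BoundedContinuousFunction 𝒳 ℝ) q,
      |Q h q| ≤ ‖h‖ * ‖h‖ * |k q.1.2.2 q.2.2.2| := by
    intro h q
    have hh1 : |h q.1.1| ≤ ‖h‖ := by
      simpa [Real.norm_eq_abs] using h.norm_coe_le_norm q.1.1
    have hh2 : |h q.2.1| ≤ ‖h‖ := by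
      simpa [Real.norm_eq_abs] using h.norm_coe_le_norm q.2.1
    have hk0 := abs_nonneg (k q.1.2.2 q.2.2.2)
    have hhn : (0:ℝ) ≤ ‖h‖ := norm_nonneg h
    simp only [Q]
    rw [abs_mul, abs_mul]
    calc |k q.1.2.2 q.2.2.2| * |h q.1.1| * |h q.2.1|
        = |k q.1.2.2 q.2.2.2| * (|h q.1.1| * |h q.2.1|) := by ring
      _ ≤ |k q.1.2.2 q.2.2.2| * (‖h‖ * ‖h‖) :=
          mul_le_mul_of_nonneg_left (mul_le_mul hh1 hh2 (abs_nonneg _) hhn) hk0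
      _ = ‖h‖ * ‖h‖ * |k q.1.2.2 q.2.2.2| := by ring
  have hQint : ∀ h : BoundedContinuousFunction 𝒳 ℝ, Integrable (Q h) ν := by
    intro h
    have hm : AEStronglyMeasurable (Q h) ν :=
      ((mk.mul (mg1 h)).mul (mg2 h)).aestronglyMeasurable
    refine (hkint.const_mul (‖h‖ * ‖h‖)).mono' hm ?_
    filter_upwards with q
    simpa [Real.norm_eq_abs] using hQptwise h q
  have hQbound : ∀ h : BoundedContinuousFunction 𝒳 ℝ,
      |signedIntegral μ (Q h)| ≤ ‖h‖ ^ 2 * ∫ q, |k q.1.2.2 q.2.2.2| ∂ν := by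
    intro h
    refine (SIaux.abs_signedIntegral_le (hQint h)).trans ?_
    rw [pow_two, ← integral_const_mul]
    refine integral_mono (hQint h).abs (hkint.const_mul _) ?_
    intro q
    exact hQptwise h q
  -- the linear map
  set L : BoundedContinuousFunction 𝒳 ℝ →ₗ[ℝ] ℝ :=
    { toFun := fun h => -(signedIntegral μ (G h))
      map_add' := by
        intro h₁ h₂
        show -(signedIntegral μ (G (h₁ + h₂)))
          = -(signedIntegral μ (G h₁)) + -(signedIntegral μ (G h₂))
        have e : G (h₁ + h₂) = fun q => G h₁ q + G h₂ q := by
          funext q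
          simp only [G, BoundedContinuousFunction.coe_add, Pi.add_apply]
          ring
        rw [e, SIaux.signedIntegral_add (hGint h₁) (hGint h₂)]
        ring
      map_smul' := by
        intro c h
        show -(signedIntegral μ (G (c • h))) = c * -(signedIntegral μ (G h))
        have e : G (c • h) = fun q => c * G h q := by
          funext q
          simp only [G, BoundedContinuousFunction.coe_smul, Pi.smul_apply, smul_eq_mul]
          ring
        rw [e, SIaux.signedIntegral_const_mul]
        ring } with hL
  have hLbound : ∀ h : BoundedContinuousFunction 𝒳 ℝ,
      ‖L h‖ ≤ (2 * (1 + ‖f‖) * ∫ q, base q ∂ν) * ‖h‖ := by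
    intro h
    have h1 : ‖L h‖ = |signedIntegral μ (G h)| := by
      simp [hL, Real.norm_eq_abs]
    rw [h1]
    refine (SIaux.abs_signedIntegral_le (hGint h)).trans ?_
    calc ∫ q, |G h q| ∂ν
        ≤ ∫ q, 2 * (1 + ‖f‖) * ‖h‖ * base q ∂ν := by
          refine integral_mono (hGint h).abs (hint.const_mul _) ?_
          intro q
          exact hGptwise h q
      _ = (2 * (1 + ‖f‖) * ∫ q, base q ∂ν) * ‖h‖ := by
          rw [integral_const_mul]; ring
  set D : BoundedContinuousFunction 𝒳 ℝ →L[ℝ] ℝ :=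
    L.mkContinuous (2 * (1 + ‖f‖) * ∫ q, base q ∂ν) hLbound with hD
  have hDapp : ∀ h : BoundedContinuousFunction 𝒳 ℝ,
      D h = -(signedIntegral μ (G h)) := fun h => rfl
  -- key algebraic identity
  have hkey : ∀ h : BoundedContinuousFunction 𝒳 ℝ,
      R (f + h) - R f - D h = signedIntegral μ (Q h) := by
    intro h
    have e : P (f + h) = fun q => P f q + (-(G h q) + Q h q) := by
      funext q
      simp only [P, G, Q, BoundedContinuousFunction.coe_add, Pi.add_apply]
      ring
    have hnegG : Integrable (fun q => -(G h q)) ν := (hGint h).neg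
    have hsum : Integrable (fun q => -(G h q) + Q h q) ν := hnegG.add (hQint h)
    have eP : signedIntegral μ (P (f + h))
        = signedIntegral μ (P f)
          + (signedIntegral μ (fun q => -(G h q)) + signedIntegral μ (Q h)) := by
      rw [e, SIaux.signedIntegral_add (hPint f) hsum,
        SIaux.signedIntegral_add hnegG (hQint h)]
    have hnegG' : signedIntegral μ (fun q => -(G h q)) = -(signedIntegral μ (G h)) := by
      have e2 : (fun q => -(G h q)) = fun q => (-1 : ℝ) * G h q := by
        funext q; ring
      rw [e2, SIaux.signedIntegral_const_mul]; ring
    have hRf : R (f + h) = signedIntegral μ (P (f + h)) := by rw [hR]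
    have hRf2 : R f = signedIntegral μ (P f) := by rw [hR]
    rw [hRf, hRf2, hDapp, eP, hnegG']
    ring
  refine ⟨D, ?_, hDapp, ?_⟩
  · -- Fréchet differentiability
    rw [hasFDerivAt_iff_isLittleO_nhds_zero]
    have hO : (fun h : BoundedContinuousFunction 𝒳 ℝ => R (f + h) - R f - D h)
        =O[nhds 0] fun h => ‖h‖ ^ 2 := by
      refine IsBigO.of_bound (∫ q, |k q.1.2.2 q.2.2.2| ∂ν) ?_
      filter_upwards with h
      rw [hkey h]
      have hb := hQbound h
      simp only [Real.norm_eq_abs]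
      rw [abs_pow, abs_norm]
      linarith
    exact hO.trans_isLittleO (isLittleO_norm_pow_id one_lt_two)
  · intro h
    rw [hkey h]
    exact hQbound h
end
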